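/- arXiv:2012.15266 — 6 statements merged into one kernel-verified Lean document; each statement's English description precedes it below -/
import Mathlib

section
/- Let A ∈ ℝ^{n×n}, B ∈ ℝ^{n×m}, C ∈ ℝ^{m×n} with C = BᵀQ for some Q = Qᵀ ≻ 0, and suppose X = Xᵀ ≻ 0 solves the KYP-LMI, i.e., [[−AᵀX − XA, Cᵀ − XB], [C − BᵀX, 0]] ⪰ 0. Define J_X = (1/2)(A X⁻¹ − X⁻¹Aᵀ) and R_X = −(1/2)(A X⁻¹ + X⁻¹Aᵀ). Then J_X is skew-symmetric, R_X is symmetric positive semidefinite, (J_X − R_X)X = A, and BᵀX = C. -/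
/-!
The upper-left block of the KYP-LMI is the Lyapunov inequality `AᵀX + XA ⪯ 0`; congruence with
`X⁻¹` turns it into `AX⁻¹ + X⁻¹Aᵀ ⪯ 0`, i.e. `R_X ⪰ 0`. Since the lower-right block vanishes and a
positive semidefinite matrix with a zero diagonal block has zero off-diagonal blocks, `Cᵀ = XB`.
Finally `J_X - R_X = AX⁻¹`, which gives `(J_X - R_X)X = A`.
-/

open Matrix

namespace Matrix

theorem PosSemidef.of_fromBlocks₁₁ {R l o : Type*} [Ring R] [PartialOrder R] [StarRing R]
    {A : Matrix l l R} {B : Matrix l o R} {C : Matrix o l R} {D : Matrix o o R}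
    (h : (fromBlocks A B C D).PosSemidef) : A.PosSemidef :=
  h.submatrix Sum.inl

open scoped ComplexOrder in
theorem PosSemidef.fromBlocks₁₂_eq_zero {𝕜 l o : Type*} [RCLike 𝕜] [Fintype l] [Fintype o]
    [DecidableEq o] {A : Matrix l l 𝕜} {B : Matrix l o 𝕜} {C : Matrix o l 𝕜}
    (h : (fromBlocks A B C 0).PosSemidef) : B = 0 := by
  refine ext_of_mulVec_single fun j => ?_
  rw [zero_mulVec]
  have hv := (h.dotProduct_mulVec_zero_iff (Sum.elim 0 (Pi.single j 1))).mp (by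
    simp [fromBlocks_mulVec, dotProduct, Fintype.sum_sum_type])
  rw [fromBlocks_mulVec] at hv
  simpa using congrArg (fun v => v ∘ Sum.inl) hv

theorem PosSemidef.neg_mul_inv_add_inv_mul_transpose {n : Type*} [Fintype n] [DecidableEq n]
    {A X : Matrix n n ℝ} (hX : X.IsSymm) (hdet : IsUnit X.det)
    (h : (-(Aᵀ * X) - X * A).PosSemidef) : (-(A * X⁻¹ + X⁻¹ * Aᵀ)).PosSemidef := by
  have hXinv : X⁻¹ᴴ = X⁻¹ := by
    rw [conjTranspose_eq_transpose_of_trivial, transpose_nonsing_inv, hX.eq]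
  convert h.mul_mul_conjTranspose_same X⁻¹ using 1
  rw [hXinv, Matrix.mul_sub, Matrix.sub_mul, Matrix.mul_neg, Matrix.neg_mul, Matrix.mul_assoc,
    Matrix.mul_assoc, mul_nonsing_inv X hdet, ← Matrix.mul_assoc X⁻¹ X, nonsing_inv_mul X hdet,
    Matrix.mul_one, Matrix.one_mul]
  abel

end Matrix

theorem stmt4_general {n m : ℕ} (A X : Matrix (Fin n) (Fin n) ℝ)
    (B : Matrix (Fin n) (Fin m) ℝ) (C : Matrix (Fin m) (Fin n) ℝ)
    (hX : X.PosDef)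
    (hKYP : (Matrix.fromBlocks (-(Aᵀ * X) - X * A) (Cᵀ - X * B) (C - Bᵀ * X) 0).PosSemidef) :
    ((1 / 2 : ℝ) • (A * X⁻¹ - X⁻¹ * Aᵀ))ᵀ = -((1 / 2 : ℝ) • (A * X⁻¹ - X⁻¹ * Aᵀ)) ∧
    (-((1 / 2 : ℝ) • (A * X⁻¹ + X⁻¹ * Aᵀ))).PosSemidef ∧
    ((1 / 2 : ℝ) • (A * X⁻¹ - X⁻¹ * Aᵀ) - -((1 / 2 : ℝ) • (A * X⁻¹ + X⁻¹ * Aᵀ))) * X = A ∧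
    Bᵀ * X = C := by
  have hXsymm : X.IsSymm := hX.isHermitian
  have hdet : IsUnit X.det := isUnit_iff_ne_zero.mpr hX.det_pos.ne'
  have hLyap : (-(A * X⁻¹ + X⁻¹ * Aᵀ)).PosSemidef :=
    hKYP.of_fromBlocks₁₁.neg_mul_inv_add_inv_mul_transpose hXsymm hdet
  have hCt : Cᵀ = X * B := sub_eq_zero.mp hKYP.fromBlocks₁₂_eq_zero
  refine ⟨?_, ?_, ?_, ?_⟩
  · rw [transpose_smul, transpose_sub, transpose_mul, transpose_mul, transpose_transpose,
      transpose_nonsing_inv, hXsymm.eq]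
    module
  · rw [← smul_neg]
    exact hLyap.smul (by norm_num)
  · have hJR : (1 / 2 : ℝ) • (A * X⁻¹ - X⁻¹ * Aᵀ) - -((1 / 2 : ℝ) • (A * X⁻¹ + X⁻¹ * Aᵀ))
        = A * X⁻¹ := by module
    rw [hJR, Matrix.mul_assoc, nonsing_inv_mul X hdet, Matrix.mul_one]
  · rw [← transpose_transpose C, hCt, transpose_mul, hXsymm.eq]

/-- Every symmetric positive definite solution `X` of the KYP-LMI gives rise to an
alternative port-Hamiltonian representation of the same system. -/
theorem stmt4 {n m : ℕ} (A Q X : Matrix (Fin n) (Fin n) ℝ)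
    (B : Matrix (Fin n) (Fin m) ℝ) (C : Matrix (Fin m) (Fin n) ℝ)
    (hQ : Q.PosDef) (hC : C = Bᵀ * Q) (hX : X.PosDef)
    (hKYP : (Matrix.fromBlocks (-(Aᵀ * X) - X * A) (Cᵀ - X * B) (C - Bᵀ * X) 0).PosSemidef) :
    ((1 / 2 : ℝ) • (A * X⁻¹ - X⁻¹ * Aᵀ))ᵀ = -((1 / 2 : ℝ) • (A * X⁻¹ - X⁻¹ * Aᵀ)) ∧
    (-((1 / 2 : ℝ) • (A * X⁻¹ + X⁻¹ * Aᵀ))).PosSemidef ∧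
    ((1 / 2 : ℝ) • (A * X⁻¹ - X⁻¹ * Aᵀ) - -((1 / 2 : ℝ) • (A * X⁻¹ + X⁻¹ * Aᵀ))) * X = A ∧
    Bᵀ * X = C :=
  stmt4_general A X B C hX hKYP
end

section
/- Let (J, R, Q, B) define a port-Hamiltonian system with A = (J−R)Q, C = BᵀQ. Then P̂_f = Q⁻¹ satisfies the modified filter algebraic Riccati equation A·P̂_f + P̂_f·Aᵀ − P̂_f·Cᵀ·C·P̂_f + B·Bᵀ + 2R = 0. -/
open Matrix

/-- `P̂_f = Q⁻¹` solves the modified filter algebraic Riccati equation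
`A P̂_f + P̂_f Aᵀ − P̂_f Cᵀ C P̂_f + B Bᵀ + 2R = 0`. -/
theorem stmt6 {n m : ℕ} (J R Q : Matrix (Fin n) (Fin n) ℝ) (B : Matrix (Fin n) (Fin m) ℝ)
    (A : Matrix (Fin n) (Fin n) ℝ) (C : Matrix (Fin m) (Fin n) ℝ)
    (hJ : Jᵀ = -J) (hR : R.PosSemidef) (hQ : Q.PosDef)
    (hA : A = (J - R) * Q) (hC : C = Bᵀ * Q) :
    A * Q⁻¹ + Q⁻¹ * Aᵀ - Q⁻¹ * Cᵀ * C * Q⁻¹ + B * Bᵀ + (2 : ℝ) • R = 0 := by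
  have hQinv : IsUnit Q.det := isUnit_iff_ne_zero.mpr hQ.det_pos.ne'
  have hQQ : Q * Q⁻¹ = 1 := mul_nonsing_inv Q hQinv
  have hQQ' : Q⁻¹ * Q = 1 := nonsing_inv_mul Q hQinv
  have hQsym : Qᵀ = Q := hQ.isHermitian.eq
  have hRsym : Rᵀ = R := hR.isHermitian.eq
  have h1 : A * Q⁻¹ = J - R := by
    rw [hA, Matrix.mul_assoc, hQQ, Matrix.mul_one]
  have h2 : Q⁻¹ * Aᵀ = -J - R := by
    rw [hA, Matrix.transpose_mul, Matrix.transpose_sub, hJ, hRsym, hQsym,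
      ← Matrix.mul_assoc, hQQ', Matrix.one_mul, neg_sub_left, neg_add]
  have h3 : Q⁻¹ * Cᵀ * C * Q⁻¹ = B * Bᵀ := by
    rw [hC, Matrix.transpose_mul, Matrix.transpose_transpose, hQsym]
    calc Q⁻¹ * (Q * B) * (Bᵀ * Q) * Q⁻¹ = (Q⁻¹ * Q) * B * Bᵀ * (Q * Q⁻¹) := by
          simp [Matrix.mul_assoc]
      _ = B * Bᵀ := by rw [hQQ', hQQ, Matrix.one_mul, Matrix.mul_one]
  rw [h1, h2, h3, two_smul]
  abel
end

section
/- Let (J, R, Q, B) define a port-Hamiltonian system with A = (J−R)Q, C = BᵀQ, and let P̂_c = P̂_cᵀ satisfy the control Riccati equation Aᵀ P̂_c + P̂_c A − P̂_c B Bᵀ P̂_c + Cᵀ C = 0. Define Â_c = A − B Bᵀ P̂_c − Q⁻¹ Cᵀ C. Then Â_cᵀ P̂_c + P̂_c Â_c = −(Cᵀ + P̂_c B)(Cᵀ + P̂_c B)ᵀ, and in particular Â_cᵀ P̂_c + P̂_c Â_c ⪯ 0. -/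
open Matrix

/-- Lyapunov inequality for the pH-LQG controller matrix `Â_c = A − BBᵀP̂_c − Q⁻¹CᵀC`. -/
theorem stmt7 {n m : ℕ} (J R Q : Matrix (Fin n) (Fin n) ℝ) (B : Matrix (Fin n) (Fin m) ℝ)
    (A : Matrix (Fin n) (Fin n) ℝ) (C : Matrix (Fin m) (Fin n) ℝ)
    (Pc : Matrix (Fin n) (Fin n) ℝ)
    (hJ : Jᵀ = -J) (hR : R.PosSemidef) (hQ : Q.PosDef)
    (hA : A = (J - R) * Q) (hC : C = Bᵀ * Q)
    (hPc : Pcᵀ = Pc)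
    (hRic : Aᵀ * Pc + Pc * A - Pc * B * Bᵀ * Pc + Cᵀ * C = 0) :
    (A - B * Bᵀ * Pc - Q⁻¹ * Cᵀ * C)ᵀ * Pc + Pc * (A - B * Bᵀ * Pc - Q⁻¹ * Cᵀ * C) =
      -((Cᵀ + Pc * B) * (Cᵀ + Pc * B)ᵀ) ∧
    (-((A - B * Bᵀ * Pc - Q⁻¹ * Cᵀ * C)ᵀ * Pc +
        Pc * (A - B * Bᵀ * Pc - Q⁻¹ * Cᵀ * C))).PosSemidef := by
  have hQsymm : Qᵀ = Q := by
    have := hQ.isHermitian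
    simpa [Matrix.IsHermitian, conjTranspose_eq_transpose_of_trivial] using this
  have hQinv : Q⁻¹ * Q = 1 := Matrix.nonsing_inv_mul Q (isUnit_iff_ne_zero.mpr hQ.det_pos.ne')
  have hCT : Cᵀ = Q * B := by
    rw [hC, transpose_mul, transpose_transpose, hQsymm]
  have hQC : Q⁻¹ * Cᵀ * C = B * C := by
    rw [hCT, ← Matrix.mul_assoc Q⁻¹ Q B, hQinv, Matrix.one_mul]
  have hRic' : Aᵀ * Pc + Pc * A = Pc * (B * (Bᵀ * Pc)) - Cᵀ * C := by
    have h := hRic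
    rw [Matrix.mul_assoc, Matrix.mul_assoc] at h
    linear_combination (norm := noncomm_ring) h
  have key : (A - B * Bᵀ * Pc - Q⁻¹ * Cᵀ * C)ᵀ * Pc + Pc * (A - B * Bᵀ * Pc - Q⁻¹ * Cᵀ * C) =
      -((Cᵀ + Pc * B) * (Cᵀ + Pc * B)ᵀ) := by
    rw [hQC]
    simp only [transpose_sub, transpose_mul, transpose_add, transpose_transpose, hPc,
      Matrix.sub_mul, Matrix.mul_sub, Matrix.add_mul, Matrix.mul_add, Matrix.mul_assoc, neg_add]
    linear_combination (norm := abel) hRic'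
  refine ⟨key, ?_⟩
  rw [key, neg_neg]
  have := Matrix.posSemidef_self_mul_conjTranspose (Cᵀ + Pc * B)
  simpa [conjTranspose_eq_transpose_of_trivial] using this
end

section
/- Let E, J, R ∈ ℝ^{n×n} with E = Eᵀ ≻ 0, Jᵀ = −J, R = Rᵀ ⪰ 0, B ∈ ℝ^{n×m}, and let P̃_c = P̃_cᵀ ≻ 0 solve (J−R)ᵀ P̃_c E + Eᵀ P̃_c (J−R) − Eᵀ P̃_c B Bᵀ P̃_c E + B Bᵀ = 0. With the filter Gramian P̃_f = E⁻¹, define Ã_c = P̃_f⁻¹ E⁻¹ (J − R − B Bᵀ P̃_c E − E P̃_f B Bᵀ) E⁻¹ P̃_c⁻¹. Then E P̃_c (Ã_c + Ã_cᵀ) P̃_c E = −(Iₙ + E P̃_c) B Bᵀ (Iₙ + E P̃_c)ᵀ, and hence Ã_c + Ã_cᵀ ⪯ 0. -/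
open Matrix

set_option maxHeartbeats 2000000

/-- Co-energy-variable pH-LQG controller: the controller matrix `Ã_c` satisfies
`E P̃_c (Ã_c + Ã_cᵀ) P̃_c E = −(I + E P̃_c) B Bᵀ (I + E P̃_c)ᵀ`, hence `Ã_c + Ã_cᵀ ⪯ 0`. -/
theorem stmt9 {n m : ℕ} (E J R : Matrix (Fin n) (Fin n) ℝ) (B : Matrix (Fin n) (Fin m) ℝ)
    (Pc : Matrix (Fin n) (Fin n) ℝ)
    (hE : E.PosDef) (hJ : Jᵀ = -J) (hR : R.PosSemidef)
    (hPc : Pc.PosDef) (hPcSymm : Pcᵀ = Pc)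
    (hRic : (J - R)ᵀ * Pc * E + Eᵀ * Pc * (J - R) - Eᵀ * Pc * B * Bᵀ * Pc * E + B * Bᵀ = 0) :
    (let Pf : Matrix (Fin n) (Fin n) ℝ := E⁻¹
     let Ac : Matrix (Fin n) (Fin n) ℝ :=
       Pf⁻¹ * E⁻¹ * (J - R - B * Bᵀ * Pc * E - E * Pf * (B * Bᵀ)) * E⁻¹ * Pc⁻¹
     E * Pc * (Ac + Acᵀ) * Pc * E =
       -((1 + E * Pc) * (B * Bᵀ) * (1 + E * Pc)ᵀ) ∧
     (-(Ac + Acᵀ)).PosSemidef) := by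
  intro Pf Ac
  have hEsymm : Eᵀ = E := by
    have := hE.isHermitian
    simpa [Matrix.IsHermitian] using this
  have hEdet : IsUnit E.det := isUnit_iff_ne_zero.mpr hE.det_pos.ne'
  have hPdet : IsUnit Pc.det := isUnit_iff_ne_zero.mpr hPc.det_pos.ne'
  have hEinv : E⁻¹ * E = 1 := nonsing_inv_mul E hEdet
  have hEinv' : E * E⁻¹ = 1 := mul_nonsing_inv E hEdet
  have hPinv : Pc⁻¹ * Pc = 1 := nonsing_inv_mul Pc hPdet
  have hPfinv : Pf⁻¹ = E := by simp [Pf, nonsing_inv_nonsing_inv E hEdet]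
  -- reduced form of Ac
  have hAc : Ac = (J - R - B * Bᵀ * Pc * E - B * Bᵀ) * E⁻¹ * Pc⁻¹ := by
    simp only [Ac, hPfinv, Pf]
    rw [show E * E⁻¹ * (J - R - B * Bᵀ * Pc * E - E * E⁻¹ * (B * Bᵀ)) = (J - R - B * Bᵀ * Pc * E - B * Bᵀ) by rw [hEinv']; simp]
  have hX : E * Pc * Ac * Pc * E = E * Pc * (J - R - B * Bᵀ * Pc * E - B * Bᵀ) := by
    rw [hAc]
    calc E * Pc * ((J - R - B * Bᵀ * Pc * E - B * Bᵀ) * E⁻¹ * Pc⁻¹) * Pc * E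
        = E * Pc * (J - R - B * Bᵀ * Pc * E - B * Bᵀ) * E⁻¹ * (Pc⁻¹ * Pc) * E := by
          noncomm_ring
      _ = E * Pc * (J - R - B * Bᵀ * Pc * E - B * Bᵀ) * (E⁻¹ * E) := by
          rw [hPinv]; noncomm_ring
      _ = _ := by rw [hEinv]; simp
  have hRic' : (J - R)ᵀ * Pc * E + E * Pc * (J - R) - E * Pc * (B * Bᵀ) * Pc * E + B * Bᵀ = 0 := by
    rw [hEsymm] at hRic; rw [← hRic]; noncomm_ring; simp [Matrix.mul_assoc, add_mul]; abel
  have key : E * Pc * (Ac + Acᵀ) * Pc * E =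
      -((1 + E * Pc) * (B * Bᵀ) * (1 + E * Pc)ᵀ) := by
    have hXT : E * Pc * Acᵀ * Pc * E = (E * Pc * Ac * Pc * E)ᵀ := by
      simp [Matrix.transpose_mul, hEsymm, hPcSymm, Matrix.mul_assoc]
    have expand : E * Pc * (Ac + Acᵀ) * Pc * E
        = E * Pc * Ac * Pc * E + E * Pc * Acᵀ * Pc * E := by noncomm_ring
    rw [expand, hXT, hX]
    have hsub : E * Pc * (J - R - B * Bᵀ * Pc * E - B * Bᵀ)
        + (E * Pc * (J - R - B * Bᵀ * Pc * E - B * Bᵀ))ᵀ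
        - -((1 + E * Pc) * (B * Bᵀ) * (1 + E * Pc)ᵀ)
        = (J - R)ᵀ * Pc * E + E * Pc * (J - R) - E * Pc * (B * Bᵀ) * Pc * E + B * Bᵀ := by
      simp only [Matrix.transpose_mul, Matrix.transpose_add, Matrix.transpose_sub,
        Matrix.transpose_one, hEsymm, hPcSymm, Matrix.transpose_transpose]
      noncomm_ring
    have := hsub.trans hRic'
    rwa [sub_eq_zero] at this
  refine ⟨key, ?_⟩
  have hS : ((1 + E * Pc) * B * ((1 + E * Pc) * B)ᵀ).PosSemidef := by
    have h := posSemidef_self_mul_conjTranspose ((1 + E * Pc) * B)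
    rwa [conjTranspose_eq_transpose_of_trivial] at h
  have hEPdet : IsUnit (E * Pc).det := by
    rw [Matrix.det_mul]; exact hEdet.mul hPdet
  have hN : -(Ac + Acᵀ) = (E * Pc)⁻¹ * ((1 + E * Pc) * B * ((1 + E * Pc) * B)ᵀ) * ((E * Pc)⁻¹)ᵀ := by
    have h1 : (E * Pc)⁻¹ * (E * Pc * (Ac + Acᵀ) * Pc * E) * ((E * Pc)⁻¹)ᵀ = Ac + Acᵀ := by
      have hT : Pc * E = (E * Pc)ᵀ := by rw [Matrix.transpose_mul, hEsymm, hPcSymm]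
      have hTinv : (E * Pc)ᵀ * ((E * Pc)⁻¹)ᵀ = 1 := by
        rw [← Matrix.transpose_mul, nonsing_inv_mul _ hEPdet, Matrix.transpose_one]
      calc (E * Pc)⁻¹ * (E * Pc * (Ac + Acᵀ) * Pc * E) * ((E * Pc)⁻¹)ᵀ
          = ((E * Pc)⁻¹ * (E * Pc)) * (Ac + Acᵀ) * ((Pc * E) * ((E * Pc)⁻¹)ᵀ) := by
            noncomm_ring
        _ = Ac + Acᵀ := by rw [hT, hTinv, nonsing_inv_mul _ hEPdet]; simp
    rw [← h1, key]
    have : (1 + E * Pc) * B * ((1 + E * Pc) * B)ᵀ = (1 + E * Pc) * (B * Bᵀ) * (1 + E * Pc)ᵀ := by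
      simp only [Matrix.transpose_mul]; noncomm_ring; simp [Matrix.mul_assoc, add_mul]
    rw [this]
    noncomm_ring
  rw [hN]
  have := hS.mul_mul_conjTranspose_same (E * Pc)⁻¹
  simpa using this
end

section
/- Let (J, R, Q, B) define a port-Hamiltonian system with A = (J−R)Q, C = BᵀQ. Let P̂_c = P̂_cᵀ solve Aᵀ P̂_c + P̂_c A − P̂_c B Bᵀ P̂_c + Cᵀ C = 0 and set P̂_f = Q⁻¹, A_{P̂_c} = A − B Bᵀ P̂_c, and ℒ = (Iₙ + P̂_f P̂_c)⁻¹ P̂_f (assuming Iₙ + P̂_f P̂_c is invertible). Then ℒ is symmetric and satisfies the Lyapunov inequality A_{P̂_c} ℒ + ℒ A_{P̂_c}ᵀ + B Bᵀ ⪯ 0; more precisely, (Iₙ + P̂_f P̂_c) (A_{P̂_c} ℒ + ℒ A_{P̂_c}ᵀ + B Bᵀ) (Iₙ + P̂_c P̂_f) = −2R. -/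
/-!
Write `S = I + P̂_f P̂_c`. Push-through gives `S⁻¹ P̂_f = P̂_f (Sᵀ)⁻¹`, so `ℒ` is symmetric and
`S ℒ = ℒ Sᵀ = P̂_f`. Conjugating the Lyapunov expression by `S` and substituting the control
Riccati equation leaves exactly the residual `A P̂_f + P̂_f Aᵀ − P̂_f Cᵀ C P̂_f + B Bᵀ` of the
filter Riccati equation at `P̂_f`. For `P̂_f = Q⁻¹` this residual is `(J − R) + (−J − R) = −2R`,
and since `S` is invertible, `−2R ⪯ 0` transfers back to the Lyapunov expression.
-/

open Matrix

namespace Matrix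

variable {n : Type*} [Fintype n] [DecidableEq n] {α : Type*} [CommRing α]
  {P P' : Matrix n n α}

theorem isUnit_det_one_add_mul_comm (h : IsUnit (1 + P * P')) : IsUnit (1 + P' * P).det := by
  rwa [det_one_add_mul_comm, ← isUnit_iff_isUnit_det]

theorem inv_one_add_mul_mul_eq_mul_inv_one_add_mul (h : IsUnit (1 + P * P')) :
    (1 + P * P')⁻¹ * P = P * (1 + P' * P)⁻¹ := by
  have h' := isUnit_det_one_add_mul_comm h
  rw [isUnit_iff_isUnit_det] at h
  calc (1 + P * P')⁻¹ * P
      = (1 + P * P')⁻¹ * (P * (1 + P' * P)) * (1 + P' * P)⁻¹ := by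
        rw [← mul_assoc, mul_nonsing_inv_cancel_right _ _ h']
    _ = (1 + P * P')⁻¹ * ((1 + P * P') * P) * (1 + P' * P)⁻¹ := by noncomm_ring
    _ = P * (1 + P' * P)⁻¹ := by rw [nonsing_inv_mul_cancel_left _ _ h]

theorem transpose_inv_one_add_mul_mul (hP : Pᵀ = P) (hP' : P'ᵀ = P')
    (h : IsUnit (1 + P * P')) : ((1 + P * P')⁻¹ * P)ᵀ = (1 + P * P')⁻¹ * P := by
  rw [transpose_mul, transpose_nonsing_inv, transpose_add, transpose_one, transpose_mul, hP, hP',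
    inv_one_add_mul_mul_eq_mul_inv_one_add_mul h]

theorem one_add_mul_mul_inv_one_add_mul_mul (h : IsUnit (1 + P * P')) :
    (1 + P * P') * ((1 + P * P')⁻¹ * P) = P :=
  mul_nonsing_inv_cancel_left _ _ ((isUnit_iff_isUnit_det _).1 h)

theorem inv_one_add_mul_mul_mul_one_add_mul (h : IsUnit (1 + P * P')) :
    (1 + P * P')⁻¹ * P * (1 + P' * P) = P := by
  rw [inv_one_add_mul_mul_eq_mul_inv_one_add_mul h,
    nonsing_inv_mul_cancel_right _ _ (isUnit_det_one_add_mul_comm h)]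

theorem conj_lyapunov_eq_filter_riccati_residual {A G H Pc Pf L : Matrix n n α}
    (hG : Gᵀ = G) (hPc : Pcᵀ = Pc) (hRic : Aᵀ * Pc + Pc * A - Pc * G * Pc + H = 0)
    (hSL : (1 + Pf * Pc) * L = Pf) (hLS : L * (1 + Pc * Pf) = Pf) :
    (1 + Pf * Pc) * ((A - G * Pc) * L + L * (A - G * Pc)ᵀ + G) * (1 + Pc * Pf) =
      A * Pf + Pf * Aᵀ - Pf * H * Pf + G := by
  have hAPcT : (A - G * Pc)ᵀ = Aᵀ - Pc * G := by
    rw [transpose_sub, transpose_mul, hG, hPc]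
  calc (1 + Pf * Pc) * ((A - G * Pc) * L + L * (A - G * Pc)ᵀ + G) * (1 + Pc * Pf)
      = (1 + Pf * Pc) * (A - G * Pc) * (L * (1 + Pc * Pf))
        + (1 + Pf * Pc) * L * ((Aᵀ - Pc * G) * (1 + Pc * Pf))
        + (1 + Pf * Pc) * G * (1 + Pc * Pf) := by
        rw [hAPcT]; noncomm_ring
    _ = A * Pf + Pf * Aᵀ - Pf * H * Pf + G
        + Pf * (Aᵀ * Pc + Pc * A - Pc * G * Pc + H) * Pf := by rw [hLS, hSL]; noncomm_ring
    _ = A * Pf + Pf * Aᵀ - Pf * H * Pf + G := by rw [hRic, mul_zero, zero_mul, add_zero]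

theorem portHamiltonian_filter_riccati_residual {m : Type*} [Fintype m] {J R Q : Matrix n n α}
    (B : Matrix n m α) (hJ : Jᵀ = -J) (hR : Rᵀ = R) (hQ : Qᵀ = Q) (hQdet : IsUnit Q.det) :
    (J - R) * Q * Q⁻¹ + Q⁻¹ * ((J - R) * Q)ᵀ - Q⁻¹ * ((Bᵀ * Q)ᵀ * (Bᵀ * Q)) * Q⁻¹ + B * Bᵀ =
      -((2 : α) • R) := by
  have hCTC : (Bᵀ * Q)ᵀ * (Bᵀ * Q) = Q * (B * Bᵀ) * Q := by
    rw [transpose_mul, transpose_transpose, hQ]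
    simp only [Matrix.mul_assoc]
  have hQQinv : Q * Q⁻¹ = 1 := mul_nonsing_inv Q hQdet
  have hQinvQ : Q⁻¹ * Q = 1 := nonsing_inv_mul Q hQdet
  rw [hCTC]
  generalize B * Bᵀ = G
  calc (J - R) * Q * Q⁻¹ + Q⁻¹ * ((J - R) * Q)ᵀ - Q⁻¹ * (Q * G * Q) * Q⁻¹ + G
      = (J - R) * (Q * Q⁻¹) + (Q⁻¹ * Q) * (-J - R) - (Q⁻¹ * Q) * G * (Q * Q⁻¹) + G := by
        rw [transpose_mul, transpose_sub, hJ, hR, hQ]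
        noncomm_ring
    _ = -((2 : α) • R) := by
        rw [hQQinv, hQinvQ, two_smul]
        noncomm_ring

end Matrix

/-- `ℒ = (I + P̂_f P̂_c)⁻¹ P̂_f` with `P̂_f = Q⁻¹` is symmetric and satisfies the Lyapunov
inequality `A_{P̂_c} ℒ + ℒ A_{P̂_c}ᵀ + B Bᵀ ⪯ 0`; more precisely, conjugating by
`I + P̂_f P̂_c` gives exactly `−2R`. -/
theorem stmt10 {n m : ℕ} (J R Q : Matrix (Fin n) (Fin n) ℝ) (B : Matrix (Fin n) (Fin m) ℝ)
    (A : Matrix (Fin n) (Fin n) ℝ) (C : Matrix (Fin m) (Fin n) ℝ)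
    (Pc : Matrix (Fin n) (Fin n) ℝ)
    (hJ : Jᵀ = -J) (hR : R.PosSemidef) (hQ : Q.PosDef)
    (hA : A = (J - R) * Q) (hC : C = Bᵀ * Q)
    (hPc : Pcᵀ = Pc)
    (hRic : Aᵀ * Pc + Pc * A - Pc * B * Bᵀ * Pc + Cᵀ * C = 0)
    (hInv : IsUnit (1 + Q⁻¹ * Pc)) :
    (let Pf : Matrix (Fin n) (Fin n) ℝ := Q⁻¹
     let L : Matrix (Fin n) (Fin n) ℝ := (1 + Pf * Pc)⁻¹ * Pf
     let APc : Matrix (Fin n) (Fin n) ℝ := A - B * Bᵀ * Pc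
     Lᵀ = L ∧
     (-(APc * L + L * APcᵀ + B * Bᵀ)).PosSemidef ∧
     (1 + Pf * Pc) * (APc * L + L * APcᵀ + B * Bᵀ) * (1 + Pc * Pf) = -((2 : ℝ) • R)) := by
  intro Pf L APc
  have hQT : Qᵀ = Q := hQ.isHermitian.eq
  have hRT : Rᵀ = R := hR.isHermitian.eq
  have hQdet : IsUnit Q.det := (isUnit_iff_isUnit_det Q).1 hQ.isUnit
  have hPf : Pfᵀ = Pf := by rw [transpose_nonsing_inv, hQT]
  have hG : (B * Bᵀ)ᵀ = B * Bᵀ := by rw [transpose_mul, transpose_transpose]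
  have hRic' : Aᵀ * Pc + Pc * A - Pc * (B * Bᵀ) * Pc + Cᵀ * C = 0 := by
    rwa [← Matrix.mul_assoc Pc B]
  have hconj : (1 + Pf * Pc) * (APc * L + L * APcᵀ + B * Bᵀ) * (1 + Pc * Pf) =
      -((2 : ℝ) • R) := by
    refine (conj_lyapunov_eq_filter_riccati_residual hG hPc hRic'
      (one_add_mul_mul_inv_one_add_mul_mul hInv) (inv_one_add_mul_mul_mul_one_add_mul hInv))
      |>.trans ?_
    rw [hA, hC]
    exact portHamiltonian_filter_riccati_residual B hJ hRT hQT hQdet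
  have hS : (1 + Pf * Pc)ᴴ = 1 + Pc * Pf := by
    rw [conjTranspose_eq_transpose_of_trivial, transpose_add, transpose_one, transpose_mul, hPf,
      hPc]
  refine ⟨transpose_inv_one_add_mul_mul hPf hPc hInv, ?_, hconj⟩
  refine (hInv.posSemidef_star_right_conjugate_iff).1 ?_
  rw [star_eq_conjTranspose, hS, mul_neg, neg_mul, hconj, neg_neg]
  exact hR.smul zero_le_two
end

section
/- Let (J, R, Q, B) define a port-Hamiltonian system with A = (J−R)Q, C = BᵀQ, asymptotically stable A, and suppose Q⁻¹ = Y satisfies −A Y − Y Aᵀ = 2R with Cholesky factorization 2R = L_Rᵀ L_R. Then the Popov function Φ(s) = G(−s)ᵀ + G(s), with G(s) = C(sIₙ − A)⁻¹B, admits the spectral factorization Φ(s) = V(s)·V(−s)ᵀ where V(s) = C(sIₙ − A)⁻¹ L_Rᵀ. -/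
open Matrix

/-- Spectral factorization of the Popov function of a port-Hamiltonian system:
`Φ(s) = G(−s)ᵀ + G(s) = V(s) V(−s)ᵀ` with `V(s) = C (sI − A)⁻¹ L_Rᵀ`, `2R = L_Rᵀ L_R`. -/
theorem stmt19 {n m : ℕ} (J R Q LR : Matrix (Fin n) (Fin n) ℝ)
    (B : Matrix (Fin n) (Fin m) ℝ)
    (A : Matrix (Fin n) (Fin n) ℝ) (C : Matrix (Fin m) (Fin n) ℝ)
    (hJ : Jᵀ = -J) (hR : R.PosSemidef) (hQ : Q.PosDef)
    (hA : A = (J - R) * Q) (hC : C = Bᵀ * Q)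
    (hstab : ∀ μ ∈ spectrum ℂ (A.map (algebraMap ℝ ℂ)), μ.re < 0)
    (hY : -(A * Q⁻¹) - Q⁻¹ * Aᵀ = (2 : ℝ) • R)
    (hL : (2 : ℝ) • R = LRᵀ * LR) :
    ∀ s : ℂ,
      IsUnit (s • (1 : Matrix (Fin n) (Fin n) ℂ) - A.map (algebraMap ℝ ℂ)) →
      IsUnit ((-s) • (1 : Matrix (Fin n) (Fin n) ℂ) - A.map (algebraMap ℝ ℂ)) →
      (let Ac := A.map (algebraMap ℝ ℂ)
       let Bc := B.map (algebraMap ℝ ℂ)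
       let Cc := C.map (algebraMap ℝ ℂ)
       let LRc := LR.map (algebraMap ℝ ℂ)
       let G : ℂ → Matrix (Fin m) (Fin m) ℂ :=
         fun z => Cc * (z • (1 : Matrix (Fin n) (Fin n) ℂ) - Ac)⁻¹ * Bc
       let V : ℂ → Matrix (Fin m) (Fin n) ℂ :=
         fun z => Cc * (z • (1 : Matrix (Fin n) (Fin n) ℂ) - Ac)⁻¹ * LRcᵀ
       (G (-s))ᵀ + G s = V s * (V (-s))ᵀ) := by
  intro s hMu hNu
  dsimp only
  have f := algebraMap ℝ ℂ
  set Ac := A.map (algebraMap ℝ ℂ) with hAcd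
  set Bc := B.map (algebraMap ℝ ℂ) with hBcd
  set Cc := C.map (algebraMap ℝ ℂ) with hCcd
  set LRc := LR.map (algebraMap ℝ ℂ) with hLRcd
  set Yc := (Q⁻¹).map (algebraMap ℝ ℂ) with hYcd
  set M := s • (1 : Matrix (Fin n) (Fin n) ℂ) - Ac with hMd
  set N := (-s) • (1 : Matrix (Fin n) (Fin n) ℂ) - Ac with hNd
  -- real facts
  have hQT : Qᵀ = Q := hQ.isHermitian
  have hQdet : IsUnit Q.det := hQ.isUnit.map (Matrix.detMonoidHom)
  have hB : B = Q⁻¹ * Cᵀ := by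
    rw [hC, transpose_mul, transpose_transpose, hQT, ← Matrix.mul_assoc,
      Matrix.nonsing_inv_mul Q hQdet, Matrix.one_mul]
  have hBt : Bᵀ = C * Q⁻¹ := by
    rw [hC, Matrix.mul_assoc, Matrix.mul_nonsing_inv Q hQdet, Matrix.mul_one]
  have hKey : LRᵀ * LR = -(A * Q⁻¹) - Q⁻¹ * Aᵀ := (hY.trans hL).symm
  -- complex facts
  have hBc : Bc = Yc * Ccᵀ := by
    rw [hBcd, hYcd, hCcd, ← Matrix.transpose_map, ← Matrix.map_mul, ← hB]
  have hBtc : Bcᵀ = Cc * Yc := by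
    rw [hBcd, hCcd, hYcd, ← Matrix.map_mul, ← hBt, Matrix.transpose_map]
  have hKeyc : LRcᵀ * LRc = -(Ac * Yc) - Yc * Acᵀ := by
    have := congrArg (algebraMap ℝ ℂ).mapMatrix hKey
    simp only [_root_.map_sub, _root_.map_neg, RingHom.mapMatrix_apply, Matrix.map_mul,
      Matrix.transpose_map] at this
    exact this
  have hMN : M * Yc + Yc * Nᵀ = -(Ac * Yc) - Yc * Acᵀ := by
    rw [hMd, hNd]
    simp [Matrix.sub_mul, Matrix.mul_sub, Matrix.smul_mul, Matrix.mul_smul,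
      Matrix.transpose_sub, Matrix.transpose_smul, Matrix.transpose_one, neg_smul]
    abel
  have hMdet : IsUnit M.det := (Matrix.isUnit_iff_isUnit_det M).mp hMu
  have hNdet : IsUnit N.det := (Matrix.isUnit_iff_isUnit_det N).mp hNu
  have hNTdet : IsUnit Nᵀ.det := by rwa [Matrix.det_transpose]
  calc (Cc * N⁻¹ * Bc)ᵀ + Cc * M⁻¹ * Bc
      = Cc * Yc * (Nᵀ)⁻¹ * Ccᵀ + Cc * M⁻¹ * (Yc * Ccᵀ) := by
        rw [Matrix.transpose_mul, Matrix.transpose_mul, Matrix.transpose_nonsing_inv,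
          hBtc, hBc, ← Matrix.mul_assoc, ← Matrix.mul_assoc]
    _ = Cc * M⁻¹ * (M * Yc + Yc * Nᵀ) * ((Nᵀ)⁻¹ * Ccᵀ) := by
        rw [Matrix.mul_add, Matrix.add_mul]
        congr 1
        · simp only [Matrix.mul_assoc]
          rw [Matrix.nonsing_inv_mul_cancel_left _ _ hMdet]
        · simp only [Matrix.mul_assoc]
          rw [Matrix.mul_nonsing_inv_cancel_left _ _ hNTdet]
    _ = Cc * M⁻¹ * LRcᵀ * (LRc * ((Nᵀ)⁻¹ * Ccᵀ)) := by
        rw [hMN, ← hKeyc, Matrix.mul_assoc (Cc * M⁻¹), Matrix.mul_assoc LRcᵀ,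
          ← Matrix.mul_assoc (Cc * M⁻¹)]
    _ = Cc * M⁻¹ * LRcᵀ * (Cc * N⁻¹ * LRcᵀ)ᵀ := by
        simp only [Matrix.transpose_mul, Matrix.transpose_nonsing_inv,
          Matrix.transpose_transpose, Matrix.mul_assoc]
end
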